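/- Let n ≥ 3 and let k be an algebraically closed field whose characteristic is either 0 or at least n. Then the Büchi surface X_n is smooth; concretely, at every nonzero solution x = (x_0, …, x_n) ∈ k^{n+1} of the Büchi system of length n, the (n−2)×(n+1) Jacobian matrix J with entries J[i,0] = −4x_0, J[i,i] = 2x_i, J[i,i+1] = −4x_{i+1}, J[i,i+2] = 2x_{i+2} (for i = 1,…,n−2), and all other entries 0, has rank n−2. -/
import Mathlib


/-- The `(n-2) × (n+1)` Jacobian matrix of the Büchi system of length `n` at
a point `x`: a row index `i : Fin (n-2)` represents the equation indexed by
`i+1`, and the corresponding row has entries `-4x_0` in column `0`,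
`2x_{i+1}` in column `i+1`, `-4x_{i+2}` in column `i+2` and `2x_{i+3}` in
column `i+3`, and `0` elsewhere. -/
def buchiJacobian (n : ℕ) {k : Type*} [Field k] (x : ℕ → k) :
    Matrix (Fin (n - 2)) (Fin (n + 1)) k :=
  Matrix.of fun i j =>
    if (j : ℕ) = 0 then -4 * x 0
    else if (j : ℕ) = (i : ℕ) + 1 then 2 * x ((i : ℕ) + 1)
    else if (j : ℕ) = (i : ℕ) + 2 then -4 * x ((i : ℕ) + 2)
    else if (j : ℕ) = (i : ℕ) + 3 then 2 * x ((i : ℕ) + 3)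
    else 0

/-- Over an algebraically closed field whose characteristic is `0` or at least
`n`, the Büchi surface `X_n` (`n ≥ 3`) is smooth: at every nonzero solution of
the Büchi system of length `n`, the Jacobian matrix has rank `n - 2`. -/
theorem buchi_jacobian_rank {k : Type*} [Field k] [IsAlgClosed k]
    (n : ℕ) (hn : 3 ≤ n) (hchar : ringChar k = 0 ∨ n ≤ ringChar k)
    (x : ℕ → k)
    (hsys : ∀ i : ℕ, 1 ≤ i → i ≤ n - 2 →
      x (i + 2) ^ 2 - 2 * x (i + 1) ^ 2 + x i ^ 2 - 2 * x 0 ^ 2 = 0)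
    (hx : ∃ i ≤ n, x i ≠ 0) :
    (buchiJacobian n x).rank = n - 2 := by
  classical
  -- nonzero casts of small naturals
  have hcast : ∀ m : ℕ, 1 ≤ m → m < n → (m : k) ≠ 0 := by
    intro m h1 h2 h0
    rcases hchar with h | h
    · have : CharP k 0 := h ▸ ringChar.charP k
      have : CharZero k := CharP.charP_to_charZero k
      exact absurd (Nat.cast_eq_zero.mp h0) (by omega)
    · have hc : CharP k (ringChar k) := ringChar.charP k
      rw [CharP.cast_eq_zero_iff k (ringChar k)] at h0
      have := Nat.le_of_dvd (by omega) h0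
      omega
  have hsub : ∀ p q : ℕ, 1 ≤ p → p < q → q ≤ n → (q : k) - (p : k) ≠ 0 := by
    intro p q h1 h2 h3 h0
    apply hcast (q - p) (by omega) (by omega)
    rw [Nat.cast_sub h2.le]
    exact h0
  have hne' : ∀ p q : ℕ, 1 ≤ p → p ≤ n → 1 ≤ q → q ≤ n → p ≠ q → (p : k) ≠ (q : k) := by
    intro p q h1 h2 h3 h4 h5 heq
    rcases Nat.lt_or_ge p q with h | h
    · exact hsub p q h1 h h4 (by rw [heq]; ring)
    · exact hsub q p h3 (by omega) h2 (by rw [heq]; ring)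
  -- the squares follow a quadratic polynomial
  have hq : ∀ i : ℕ, 1 ≤ i → i ≤ n →
      x i ^ 2 = x 1 ^ 2 + ((i : k) - 1) * (x 2 ^ 2 - x 1 ^ 2)
        + ((i : k) - 1) * ((i : k) - 2) * x 0 ^ 2 := by
    intro i
    induction i using Nat.strong_induction_on with
    | _ i ih =>
      intro h1 h2
      rcases Nat.lt_or_ge i 3 with h3 | h3
      · interval_cases i
        · push_cast; ring
        · push_cast; ring
      · obtain ⟨m, rfl⟩ : ∃ m, i = m + 3 := ⟨i - 3, by omega⟩
        have e1 := ih (m + 2) (by omega) (by omega) (by omega)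
        have e2 := ih (m + 1) (by omega) (by omega) (by omega)
        have e3 := hsys (m + 1) (by omega) (by omega)
        have e3' : x (m + 3) ^ 2 - 2 * x (m + 2) ^ 2 + x (m + 1) ^ 2 - 2 * x 0 ^ 2 = 0 := e3
        push_cast
        push_cast at e1 e2
        linear_combination 2 * e1 - e2 + e3'
  -- no three zeros among x 1, ..., x n
  have h3z : ∀ r1 r2 r3 : ℕ, 1 ≤ r1 → r1 ≤ n → 1 ≤ r2 → r2 ≤ n → 1 ≤ r3 → r3 ≤ n →
      r1 ≠ r2 → r1 ≠ r3 → r2 ≠ r3 → x r1 = 0 → x r2 = 0 → x r3 = 0 → False := by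
    intro r1 r2 r3 ha1 hb1 ha2 hb2 ha3 hb3 h12 h13 h23 hz1 hz2 hz3
    have e1 := hq r1 ha1 hb1
    have e2 := hq r2 ha2 hb2
    have e3 := hq r3 ha3 hb3
    rw [hz1] at e1; rw [hz2] at e2; rw [hz3] at e3
    have ht12 : (r1 : k) - (r2 : k) ≠ 0 := sub_ne_zero.mpr (hne' r1 r2 ha1 hb1 ha2 hb2 h12)
    have ht13 : (r1 : k) - (r3 : k) ≠ 0 := sub_ne_zero.mpr (hne' r1 r3 ha1 hb1 ha3 hb3 h13)
    have ht23 : (r2 : k) - (r3 : k) ≠ 0 := sub_ne_zero.mpr (hne' r2 r3 ha2 hb2 ha3 hb3 h23)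
    have d12 : (x 2 ^ 2 - x 1 ^ 2) + ((r1 : k) + (r2 : k) - 3) * x 0 ^ 2 = 0 := by
      have h : ((r1 : k) - (r2 : k)) *
          ((x 2 ^ 2 - x 1 ^ 2) + ((r1 : k) + (r2 : k) - 3) * x 0 ^ 2) = 0 := by
        linear_combination e2 - e1
      exact (mul_eq_zero.mp h).resolve_left ht12
    have d13 : (x 2 ^ 2 - x 1 ^ 2) + ((r1 : k) + (r3 : k) - 3) * x 0 ^ 2 = 0 := by
      have h : ((r1 : k) - (r3 : k)) *
          ((x 2 ^ 2 - x 1 ^ 2) + ((r1 : k) + (r3 : k) - 3) * x 0 ^ 2) = 0 := by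
        linear_combination e3 - e1
      exact (mul_eq_zero.mp h).resolve_left ht13
    have hα : x 0 ^ 2 = 0 := by
      have h : ((r2 : k) - (r3 : k)) * x 0 ^ 2 = 0 := by linear_combination d12 - d13
      exact (mul_eq_zero.mp h).resolve_left ht23
    have hβ : x 2 ^ 2 - x 1 ^ 2 = 0 := by
      linear_combination d12 - ((r1 : k) + (r2 : k) - 3) * hα
    have hγ : x 1 ^ 2 = 0 := by
      linear_combination -e1 - ((r1 : k) - 1) * hβ - ((r1 : k) - 1) * ((r1 : k) - 2) * hα
    obtain ⟨i, hin, hxi⟩ := hx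
    rcases Nat.eq_zero_or_pos i with rfl | hi
    · exact hxi (sq_eq_zero_iff.mp hα)
    · apply hxi
      apply sq_eq_zero_iff.mp
      calc x i ^ 2 = _ := hq i hi hin
      _ = 0 := by linear_combination ((i : k) - 1) * hβ + ((i : k) - 1) * ((i : k) - 2) * hα + hγ
  -- row independence
  have hrank : ∀ c : Fin (n - 2) → k, Matrix.vecMul c (buchiJacobian n x) = 0 → c = 0 := by
    intro c hc
    set C : ℕ → k := fun m => if h : 1 ≤ m ∧ m ≤ n - 2 then c ⟨m - 1, by omega⟩ else 0 with hCdef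
    have hC0 : C 0 = 0 := by rw [hCdef]; norm_num
    have hChigh : ∀ m, n - 2 < m → C m = 0 := by
      intro m hm
      rw [hCdef]
      exact dif_neg (by omega)
    have hCc : ∀ i : Fin (n - 2), c i = C ((i : ℕ) + 1) := by
      intro i
      have hi := i.isLt
      have hmk : (⟨(i : ℕ) + 1 - 1, by omega⟩ : Fin (n - 2)) = i := by
        apply Fin.ext; simp
      rw [hCdef]
      show c i = dite _ _ _
      rw [dif_pos ⟨by omega, by omega⟩, hmk]
    -- the entry function over ℕ
    set E : ℕ → ℕ → k := fun ii jj =>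
      if jj = 0 then -4 * x 0
      else if jj = ii + 1 then 2 * x (ii + 1)
      else if jj = ii + 2 then -4 * x (ii + 2)
      else if jj = ii + 3 then 2 * x (ii + 3)
      else 0 with hEdef
    -- column equations
    have hcol : ∀ j : ℕ, 1 ≤ j → j ≤ n →
        x j * (C j - 2 * C (j - 1) + C (j - 2)) = 0 := by
      intro j hj1 hjn
      have hjf : j < n + 1 := by omega
      have h := congrFun hc ⟨j, hjf⟩
      have hsum0 : Matrix.vecMul c (buchiJacobian n x) ⟨j, hjf⟩
          = ∑ i : Fin (n - 2), c i * buchiJacobian n x i ⟨j, hjf⟩ := by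
        simp [Matrix.vecMul, dotProduct]
      have hentry : ∀ i : Fin (n - 2), buchiJacobian n x i ⟨j, hjf⟩ = E (i : ℕ) j :=
        fun i => rfl
      have hterm : ∀ m : ℕ, C (m + 1) * E m j
          = (if j = m + 1 then 2 * x j * C (m + 1) else 0)
            + (if j = m + 2 then -4 * x j * C (m + 1) else 0)
            + (if j = m + 3 then 2 * x j * C (m + 1) else 0) := by
        intro m
        rw [hEdef]
        simp only
        by_cases h1 : j = m + 1
        · subst h1; split_ifs <;> first | omega | ring1 | exact ((by assumption : False)).elim
        by_cases h2 : j = m + 2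
        · subst h2; split_ifs <;> first | omega | ring1 | exact ((by assumption : False)).elim
        by_cases h3 : j = m + 3
        · subst h3; split_ifs <;> first | omega | ring1 | exact ((by assumption : False)).elim
        split_ifs <;> first | omega | ring1 | exact ((by assumption : False)).elim
      have hsum1 : ∑ i : Fin (n - 2), c i * buchiJacobian n x i ⟨j, hjf⟩
          = ∑ m ∈ Finset.range (n - 2), C (m + 1) * E m j := by
        rw [← Fin.sum_univ_eq_sum_range (fun m => C (m + 1) * E m j) (n - 2)]
        exact Finset.sum_congr rfl fun i _ => by rw [hCc i, hentry i]
      have hsum2 : ∑ m ∈ Finset.range (n - 2), C (m + 1) * E m j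
          = ∑ m ∈ Finset.range n, C (m + 1) * E m j := by
        apply Finset.sum_subset (Finset.range_subset_range.mpr (by omega))
        intro m _ hm
        rw [Finset.mem_range] at hm
        rw [hChigh (m + 1) (by omega), zero_mul]
      have hsplit : ∑ m ∈ Finset.range n, C (m + 1) * E m j
          = (∑ m ∈ Finset.range n, if j = m + 1 then 2 * x j * C (m + 1) else 0)
            + (∑ m ∈ Finset.range n, if j = m + 2 then -4 * x j * C (m + 1) else 0)
            + (∑ m ∈ Finset.range n, if j = m + 3 then 2 * x j * C (m + 1) else 0) := by
        rw [← Finset.sum_add_distrib, ← Finset.sum_add_distrib]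
        exact Finset.sum_congr rfl fun m _ => hterm m
      have hs1 : (∑ m ∈ Finset.range n, if j = m + 1 then 2 * x j * C (m + 1) else 0)
          = 2 * x j * C j := by
        have hz : ∀ b ∈ Finset.range n, b ≠ j - 1 →
            (if j = b + 1 then 2 * x j * C (b + 1) else 0) = 0 := by
          intro b hb hbne
          rw [if_neg (by omega)]
        rw [Finset.sum_eq_single_of_mem (j - 1) (Finset.mem_range.mpr (by omega)) hz]
        rw [if_pos (by omega)]
        have he : j - 1 + 1 = j := by omega
        rw [he]
      have hs2 : (∑ m ∈ Finset.range n, if j = m + 2 then -4 * x j * C (m + 1) else 0)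
          = -4 * x j * C (j - 1) := by
        rcases Nat.lt_or_ge j 2 with hj2 | hj2
        · rw [Finset.sum_eq_zero (fun b _ => if_neg (by omega))]
          have : j - 1 = 0 := by omega
          rw [this, hC0]
          ring
        · have hz : ∀ b ∈ Finset.range n, b ≠ j - 2 →
              (if j = b + 2 then -4 * x j * C (b + 1) else 0) = 0 := by
            intro b hb hbne
            rw [if_neg (by omega)]
          rw [Finset.sum_eq_single_of_mem (j - 2) (Finset.mem_range.mpr (by omega)) hz]
          rw [if_pos (by omega)]
          have he : j - 2 + 1 = j - 1 := by omega
          rw [he]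
      have hs3 : (∑ m ∈ Finset.range n, if j = m + 3 then 2 * x j * C (m + 1) else 0)
          = 2 * x j * C (j - 2) := by
        rcases Nat.lt_or_ge j 3 with hj3 | hj3
        · rw [Finset.sum_eq_zero (fun b _ => if_neg (by omega))]
          have : j - 2 = 0 := by omega
          rw [this, hC0]
          ring
        · have hz : ∀ b ∈ Finset.range n, b ≠ j - 3 →
              (if j = b + 3 then 2 * x j * C (b + 1) else 0) = 0 := by
            intro b hb hbne
            rw [if_neg (by omega)]
          rw [Finset.sum_eq_single_of_mem (j - 3) (Finset.mem_range.mpr (by omega)) hz]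
          rw [if_pos (by omega)]
          have he : j - 3 + 1 = j - 2 := by omega
          rw [he]
      rw [hsum0, hsum1, hsum2, hsplit, hs1, hs2, hs3] at h
      have h2ne : (2 : k) ≠ 0 := hcast 2 (by omega) (by omega)
      have h2 : (2 : k) * (x j * (C j - 2 * C (j - 1) + C (j - 2))) = 0 := by
        have h' : (0 : Fin (n + 1) → k) ⟨j, hjf⟩ = 0 := rfl
        rw [h'] at h
        linear_combination h
      exact (mul_eq_zero.mp h2).resolve_left h2ne
    -- telescoping sums of the second differences
    set D : ℕ → k := fun m => C m - 2 * C (m - 1) + C (m - 2) with hDdef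
    have hT1 : ∀ N : ℕ, 1 ≤ N → ∑ m ∈ Finset.Icc 1 N, D m = C N - C (N - 1) := by
      intro N hN
      induction N with
      | zero => omega
      | succ N ih =>
        rcases Nat.eq_zero_or_pos N with rfl | hN'
        · simp [hDdef, hC0]
        · rw [Finset.sum_Icc_succ_top (by omega), ih hN', hDdef]
          simp only
          have e1 : N + 1 - 1 = N := by omega
          have e2 : N + 1 - 2 = N - 1 := by omega
          rw [e1, e2]
          ring
    have hT2 : ∀ N : ℕ, 1 ≤ N →
        ∑ m ∈ Finset.Icc 1 N, ((N + 1 - m : ℕ) : k) * D m = C N := by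
      intro N hN
      induction N with
      | zero => omega
      | succ N ih =>
        rcases Nat.eq_zero_or_pos N with rfl | hN'
        · norm_num [hDdef, hC0]
        · rw [Finset.sum_Icc_succ_top (by omega)]
          have hcongr : ∀ m ∈ Finset.Icc 1 N,
              ((N + 1 + 1 - m : ℕ) : k) * D m = ((N + 1 - m : ℕ) : k) * D m + D m := by
            intro m hm
            rw [Finset.mem_Icc] at hm
            have : N + 1 + 1 - m = (N + 1 - m) + 1 := by omega
            rw [this]
            push_cast
            ring
          rw [Finset.sum_congr rfl hcongr, Finset.sum_add_distrib, ih hN', hT1 N hN']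
          have e0 : N + 1 + 1 - (N + 1) = 1 := by omega
          rw [e0, hDdef]
          simp only
          have e1 : N + 1 - 1 = N := by omega
          have e2 : N + 1 - 2 = N - 1 := by omega
          rw [e1, e2]
          push_cast
          ring
    have hCn : C n = 0 := hChigh n (by omega)
    have hCn1 : C (n - 1) = 0 := hChigh (n - 1) (by omega)
    have hS1 : ∑ m ∈ Finset.Icc 1 n, D m = 0 := by
      rw [hT1 n (by omega), hCn, hCn1, sub_zero]
    have hS2 : ∑ m ∈ Finset.Icc 1 n, ((n + 1 - m : ℕ) : k) * D m = 0 := by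
      rw [hT2 n (by omega), hCn]
    -- the set of bad indices has at most two elements
    set S : Finset ℕ := (Finset.Icc 1 n).filter (fun m => D m ≠ 0) with hSdef
    have hSx : ∀ m ∈ S, x m = 0 := by
      intro m hm
      rw [hSdef, Finset.mem_filter, Finset.mem_Icc] at hm
      by_contra hxm
      exact hm.2 ((mul_eq_zero.mp (hcol m hm.1.1 hm.1.2)).resolve_left hxm)
    have hmemS : ∀ m ∈ S, 1 ≤ m ∧ m ≤ n := by
      intro m hm
      rw [hSdef, Finset.mem_filter, Finset.mem_Icc] at hm
      exact hm.1
    have hcard : S.card ≤ 2 := by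
      by_contra hcard
      push_neg at hcard
      obtain ⟨T, hTS, hT3⟩ := Finset.exists_subset_card_eq hcard
      obtain ⟨a, b, d, hab, had, hbd, rfl⟩ := Finset.card_eq_three.mp hT3
      have ha : a ∈ S := hTS (by simp)
      have hb : b ∈ S := hTS (by simp)
      have hd : d ∈ S := hTS (by simp)
      exact h3z a b d (hmemS a ha).1 (hmemS a ha).2 (hmemS b hb).1 (hmemS b hb).2
        (hmemS d hd).1 (hmemS d hd).2 hab had hbd (hSx a ha) (hSx b hb) (hSx d hd)
    have hsub' : S ⊆ Finset.Icc 1 n := by rw [hSdef]; exact Finset.filter_subset _ _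
    have hvan : ∀ m ∈ Finset.Icc 1 n, m ∉ S → D m = 0 := by
      intro m hm hms
      by_contra hD
      exact hms (by rw [hSdef]; exact Finset.mem_filter.mpr ⟨hm, hD⟩)
    have hsumS1 : ∑ m ∈ S, D m = 0 := by
      rw [Finset.sum_subset hsub' hvan]
      exact hS1
    have hsumS2 : ∑ m ∈ S, ((n + 1 - m : ℕ) : k) * D m = 0 := by
      rw [Finset.sum_subset hsub' (fun m hm hms => by rw [hvan m hm hms, mul_zero])]
      exact hS2
    have hSempty : S = ∅ := by
      by_contra hSne
      have h1 : 1 ≤ S.card := Finset.card_pos.mpr (Finset.nonempty_of_ne_empty hSne)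
      have hDS : ∀ m ∈ S, D m ≠ 0 := by
        intro m hm
        rw [hSdef, Finset.mem_filter] at hm
        exact hm.2
      rcases (by omega : S.card = 1 ∨ S.card = 2) with h | h
      · obtain ⟨p, hp⟩ := Finset.card_eq_one.mp h
        have hpS : p ∈ S := by rw [hp]; simp
        rw [hp, Finset.sum_singleton] at hsumS1
        exact hDS p hpS hsumS1
      · obtain ⟨p, q, hpq, hpq2⟩ := Finset.card_eq_two.mp h
        have hpS : p ∈ S := by rw [hpq2]; simp
        have hqS : q ∈ S := by rw [hpq2]; simp
        rw [hpq2, Finset.sum_pair hpq] at hsumS1 hsumS2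
        have hp1 := (hmemS p hpS).1
        have hpn := (hmemS p hpS).2
        have hq1 := (hmemS q hqS).1
        have hqn := (hmemS q hqS).2
        have hcp : ((n + 1 - p : ℕ) : k) = (n : k) + 1 - (p : k) := by
          push_cast [Nat.cast_sub (by omega : p ≤ n + 1)]
          ring
        have hcq : ((n + 1 - q : ℕ) : k) = (n : k) + 1 - (q : k) := by
          push_cast [Nat.cast_sub (by omega : q ≤ n + 1)]
          ring
        rw [hcp, hcq] at hsumS2
        have hkey : ((q : k) - (p : k)) * D p = 0 := by
          linear_combination hsumS2 - ((n : k) + 1 - (q : k)) * hsumS1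
        have hqp : (q : k) - (p : k) ≠ 0 :=
          sub_ne_zero.mpr (hne' q p hq1 hqn hp1 hpn (Ne.symm hpq))
        exact hDS p hpS ((mul_eq_zero.mp hkey).resolve_left hqp)
    have hDzero : ∀ m, 1 ≤ m → m ≤ n → D m = 0 := by
      intro m h1 h2
      by_contra hD
      have : m ∈ S := by
        rw [hSdef, Finset.mem_filter, Finset.mem_Icc]
        exact ⟨⟨h1, h2⟩, hD⟩
      rw [hSempty] at this
      exact absurd this (Finset.notMem_empty m)
    have hCz : ∀ m, C m = 0 := by
      intro m
      induction m using Nat.strong_induction_on with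
      | _ m ih =>
        rcases Nat.eq_zero_or_pos m with rfl | h1
        · exact hC0
        rcases Nat.lt_or_ge (n - 2) m with h | h
        · exact hChigh m h
        · have hD := hDzero m h1 (by omega)
          rw [hDdef] at hD
          simp only at hD
          have i1 := ih (m - 1) (by omega)
          have i2 := ih (m - 2) (by omega)
          linear_combination hD + 2 * i1 - i2
    funext i
    rw [hCc i, hCz]
    rfl
  have hinj : Function.Injective ⇑((buchiJacobian n x).transpose.mulVecLin) := by
    rw [← LinearMap.ker_eq_bot]
    apply (Submodule.eq_bot_iff _).mpr
    intro c hc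
    exact hrank c (by simpa [Matrix.mulVecLin_apply] using hc)
  rw [← Matrix.rank_transpose, Matrix.rank, LinearMap.finrank_range_of_inj hinj,
    Module.finrank_fintype_fun_eq_card, Fintype.card_fin]
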